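/- Let (M, dist) be a metric space and a ∈ (0,1). Then for all x, y, z ∈ M, F_{a;x,y}(z) ≥ max( (dist(x,z) − a·dist(x,y))², (dist(z,y) − (1−a)·dist(x,y))² ). -/

import Mathlib

/-!
Writing `p = dist x z`, `q = dist z y`, `r = dist x y`, one has the identity
`F_{a;x,y}(z) - (p - a r)² = a (q² - (p - r)²)`, and `|p - r| ≤ q` by the triangle inequality,
so the first bound holds as soon as `0 ≤ a`. The second is the first one for `F_{1-a;y,x}(z)`,
which is the same function.
-/

section

variable {M : Type*} [PseudoMetricSpace M]

/-- The function `F_{a;x,y}(z)` of the paper. -/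
noncomputable def threeDistances (a : ℝ) (x y z : M) : ℝ :=
  (1 - a) * dist x z ^ 2 + a * dist z y ^ 2 - a * (1 - a) * dist x y ^ 2

theorem threeDistances_swap (a : ℝ) (x y z : M) :
    threeDistances a x y z = threeDistances (1 - a) y x z := by
  simp only [threeDistances, dist_comm z x, dist_comm y z, dist_comm y x]
  ring

theorem threeDistances_sub_sq (a : ℝ) (x y z : M) :
    threeDistances a x y z - (dist x z - a * dist x y) ^ 2
      = a * (dist z y ^ 2 - (dist x z - dist x y) ^ 2) := by
  unfold threeDistances
  ring

theorem sq_dist_sub_dist_le (x y z : M) : (dist x z - dist x y) ^ 2 ≤ dist z y ^ 2 := by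
  refine sq_le_sq' ?_ ?_
  · linarith [dist_triangle x z y]
  · linarith [dist_triangle x y z, dist_comm y z]

theorem sq_dist_sub_le_threeDistances {a : ℝ} (ha : 0 ≤ a) (x y z : M) :
    (dist x z - a * dist x y) ^ 2 ≤ threeDistances a x y z := by
  have key := threeDistances_sub_sq a x y z
  have := mul_nonneg ha (sub_nonneg.2 (sq_dist_sub_dist_le x y z))
  linarith

end

/-- Two-sided version of Lemma 3.1: the three distances function dominates the
maximum of the two squared defects. -/
theorem three_distances_lower_bound_two_sided {M : Type*} [MetricSpace M]
    (a : ℝ) (ha : a ∈ Set.Ioo (0:ℝ) 1) (x y z : M) :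
    (1 - a) * dist x z ^ 2 + a * dist z y ^ 2 - a * (1 - a) * dist x y ^ 2
      ≥ max ((dist x z - a * dist x y) ^ 2)
            ((dist z y - (1 - a) * dist x y) ^ 2) := by
  change max _ _ ≤ threeDistances a x y z
  refine max_le (sq_dist_sub_le_threeDistances ha.1.le x y z) ?_
  have h := sq_dist_sub_le_threeDistances (sub_nonneg.2 ha.2.le) y x z
  rwa [← threeDistances_swap, dist_comm y z, dist_comm y x] at h
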